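/- arXiv:2604.05031 — 5 statements merged into one kernel-verified Lean document; each statement's English description precedes it below -/
import Mathlib

section
/- Let V be a finite-dimensional complex vector space, let n ≥ 2, and let G be a connected simple graph on the index set {1,…,n}. Let {m_α} be a finite family of linear operators on V ⊗ V, and for each edge {i,j} of G let m_{α,ij} denote the operator on V^{⊗n} acting as m_α on the tensor factors i and j and as the identity elsewhere. Assume that every vector u ∈ V ⊗ V satisfying m_α u = 0 for all α is symmetric, i.e. fixed by the swap operator exchanging the two tensor factors. Then a vector ψ ∈ V^{⊗n} satisfies m_{α,ij} ψ = 0 for all α and all edges {i,j} of G if and only if ψ is invariant under the natural permutation action of the symmetric group S_n on V^{⊗n} and m_{α,i₀j₀} ψ = 0 for all α for one (equivalently, any) fixed pair of distinct indices i₀ ≠ j₀. -/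
/-!
Vanishing of the `m_α` on an edge `{i, j}` makes the two-site slice
`(a, b) ↦ ψ(…, a at i, …, b at j, …)` a common kernel vector, hence symmetric, so `ψ` is
invariant under the transposition `(i j)`. Transpositions along the edges of a connected graph
generate `S_n`, so `ψ` is `S_n`-invariant; and for an invariant `ψ`, conjugating by a
permutation moves the vanishing of `m_{α,ij} ψ` from one pair of sites to any other.
-/

/-- The operator on `(Fin n → Fin d) → ℂ` — the `n`-fold tensor power of the
finite-dimensional complex vector space `V = ℂ^d`, realized as functions on index
tuples — acting as the matrix `m` (an operator on `V ⊗ V ≅ ℂ^{d×d}`) on the tensor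
factors in positions `i` and `j`, and as the identity on all other factors. -/
noncomputable def twoSiteAct {d n : ℕ} (m : Matrix (Fin d × Fin d) (Fin d × Fin d) ℂ)
    (i j : Fin n) (ψ : (Fin n → Fin d) → ℂ) : (Fin n → Fin d) → ℂ :=
  fun x => ∑ p : Fin d, ∑ q : Fin d,
    m (x i, x j) (p, q) * ψ (Function.update (Function.update x i p) j q)

open Equiv Function

theorem Equiv.Perm.exists_apply_eq_and_apply_eq {α : Type*} [DecidableEq α] {a b c e : α}
    (hab : a ≠ b) (hce : c ≠ e) : ∃ σ : Perm α, σ a = c ∧ σ b = e := by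
  have hb : swap a c b ≠ c := by
    simpa only [swap_apply_left] using (swap a c).injective.ne hab.symm
  exact ⟨swap (swap a c b) e * swap a c,
    by simp [swap_apply_of_ne_of_ne hb.symm hce], by simp⟩

theorem SimpleGraph.Connected.subgroup_eq_top_of_swap_mem {α : Type*} [DecidableEq α] [Finite α]
    {G : SimpleGraph α} (hG : G.Connected) {H : Subgroup (Perm α)}
    (hedge : ∀ i j, G.Adj i j → swap i j ∈ H) : H = ⊤ := by
  have hwalk : ∀ i j, G.Walk i j → swap i j ∈ H := by
    intro i j w
    induction w with
    | nil => rw [swap_self]; exact H.one_mem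
    | cons huv _ ih => exact SubmonoidClass.swap_mem_trans H (hedge _ _ huv) ih
  rw [eq_top_iff, ← Perm.closure_isSwap, Subgroup.closure_le]
  rintro _ ⟨i, j, -, rfl⟩
  exact hwalk i j (hG.preconnected i j).some

def permInvariants {α β γ : Type*} (ψ : (α → β) → γ) : Subgroup (Perm α) where
  carrier := {σ | ∀ x, ψ (x ∘ σ) = ψ x}
  one_mem' _ := rfl
  mul_mem' {σ τ} hσ hτ x := by
    rw [Perm.coe_mul, ← comp_assoc, hτ, hσ]
  inv_mem' {σ} hσ x := by
    simpa [comp_assoc] using (hσ (x ∘ ⇑σ⁻¹)).symm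

section TwoSite

variable {d n : ℕ}

theorem twoSiteAct_apply_perm (m : Matrix (Fin d × Fin d) (Fin d × Fin d) ℂ)
    {ψ : (Fin n → Fin d) → ℂ} {σ : Perm (Fin n)} (hσ : σ ∈ permInvariants ψ) (i j : Fin n)
    (x : Fin n → Fin d) :
    twoSiteAct m (σ i) (σ j) ψ x = twoSiteAct m i j ψ (x ∘ σ) := by
  refine Finset.sum_congr rfl fun p _ => Finset.sum_congr rfl fun q _ => ?_
  rw [← hσ, update_comp_equiv, update_comp_equiv]
  simp

theorem twoSiteAct_eq_zero_of_forall_mem_permInvariants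
    (m : Matrix (Fin d × Fin d) (Fin d × Fin d) ℂ) {ψ : (Fin n → Fin d) → ℂ}
    (hψ : ∀ σ, σ ∈ permInvariants ψ) {i j k l : Fin n} (hij : i ≠ j) (hkl : k ≠ l)
    (h : twoSiteAct m i j ψ = 0) : twoSiteAct m k l ψ = 0 := by
  obtain ⟨σ, rfl, rfl⟩ := Perm.exists_apply_eq_and_apply_eq hij hkl
  funext x
  rw [twoSiteAct_apply_perm m (hψ σ), h, Pi.zero_apply, Pi.zero_apply]

def twoSiteSlice (ψ : (Fin n → Fin d) → ℂ) (x : Fin n → Fin d) (i j : Fin n) :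
    Fin d × Fin d → ℂ :=
  fun ab => ψ (update (update x i ab.1) j ab.2)

theorem mulVec_twoSiteSlice (m : Matrix (Fin d × Fin d) (Fin d × Fin d) ℂ)
    (ψ : (Fin n → Fin d) → ℂ) (x : Fin n → Fin d) {i j : Fin n} (hij : i ≠ j) (a b : Fin d) :
    m.mulVec (twoSiteSlice ψ x i j) (a, b) =
      twoSiteAct m i j ψ (update (update x i a) j b) := by
  simp only [Matrix.mulVec, dotProduct, Fintype.sum_prod_type, twoSiteAct, twoSiteSlice,
    update_self, update_of_ne hij, update_comm hij.symm, update_idem]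

theorem swap_mem_permInvariants {ι : Type*} (m : ι → Matrix (Fin d × Fin d) (Fin d × Fin d) ℂ)
    (hsym : ∀ u : Fin d × Fin d → ℂ, (∀ α, (m α).mulVec u = 0) →
      ∀ a b : Fin d, u (a, b) = u (b, a))
    {ψ : (Fin n → Fin d) → ℂ} {i j : Fin n} (hij : i ≠ j)
    (h : ∀ α, twoSiteAct (m α) i j ψ = 0) : swap i j ∈ permInvariants ψ := by
  intro x
  have hker : ∀ α, (m α).mulVec (twoSiteSlice ψ x i j) = 0 := fun α => by
    funext ⟨a, b⟩
    rw [mulVec_twoSiteSlice _ _ _ hij, h α, Pi.zero_apply, Pi.zero_apply]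
  calc ψ (x ∘ swap i j) = twoSiteSlice ψ x i j (x j, x i) := by
        rw [comp_swap_eq_update, update_comm hij.symm]; rfl
    _ = twoSiteSlice ψ x i j (x i, x j) := hsym _ hker _ _
    _ = ψ x := by simp [twoSiteSlice]

end TwoSite

theorem stmt0_general {d n : ℕ} (G : SimpleGraph (Fin n)) (hG : G.Connected)
    {ι : Type} (m : ι → Matrix (Fin d × Fin d) (Fin d × Fin d) ℂ)
    (hsym : ∀ u : Fin d × Fin d → ℂ, (∀ α, (m α).mulVec u = 0) →
      ∀ a b : Fin d, u (a, b) = u (b, a))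
    (ψ : (Fin n → Fin d) → ℂ) (i₀ j₀ : Fin n) (hij : i₀ ≠ j₀) :
    (∀ α, ∀ i j : Fin n, G.Adj i j → twoSiteAct (m α) i j ψ = 0) ↔
      ((∀ σ : Equiv.Perm (Fin n), ∀ x : Fin n → Fin d, ψ (x ∘ σ) = ψ x) ∧
        ∀ α, twoSiteAct (m α) i₀ j₀ ψ = 0) := by
  constructor
  · intro h
    have hinv : ∀ σ, σ ∈ permInvariants ψ := by
      refine (Subgroup.eq_top_iff' _).mp (hG.subgroup_eq_top_of_swap_mem fun i j hadj => ?_)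
      exact swap_mem_permInvariants m hsym hadj.ne (fun α => h α i j hadj)
    have : Nontrivial (Fin n) := nontrivial_of_ne i₀ j₀ hij
    obtain ⟨b, hab⟩ := hG.preconnected.exists_adj_of_nontrivial i₀
    exact ⟨hinv, fun α =>
      twoSiteAct_eq_zero_of_forall_mem_permInvariants _ hinv hab.ne hij (h α i₀ b hab)⟩
  · rintro ⟨hinv, h₀⟩ α i j hadj
    exact twoSiteAct_eq_zero_of_forall_mem_permInvariants _ hinv hij hadj.ne (h₀ α)

/-- **Lemma 1.** Let `V = ℂ^d` be a finite-dimensional complex vector space, `n ≥ 2`,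
and `G` a connected simple graph on `{1,…,n}`.  Let `{m α}` be a finite family of
operators on `V ⊗ V` such that every common kernel vector is symmetric (fixed by the
swap `u(a,b) ↦ u(b,a)`).  Then `ψ ∈ V^{⊗n}` is annihilated by all `m_{α,ij}` over the
edges of `G` iff `ψ` is invariant under the permutation action of `S_n`
(`(σ • ψ)(x) = ψ(x ∘ σ)`) and is annihilated by the `m_α` acting on any one fixed pair
of distinct sites `i₀ ≠ j₀`. -/
theorem stmt0 {d n : ℕ} (hn : 2 ≤ n) (G : SimpleGraph (Fin n)) (hG : G.Connected)
    {ι : Type} [Fintype ι] (m : ι → Matrix (Fin d × Fin d) (Fin d × Fin d) ℂ)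
    (hsym : ∀ u : Fin d × Fin d → ℂ, (∀ α, (m α).mulVec u = 0) →
      ∀ a b : Fin d, u (a, b) = u (b, a))
    (ψ : (Fin n → Fin d) → ℂ) (i₀ j₀ : Fin n) (hij : i₀ ≠ j₀) :
    (∀ α, ∀ i j : Fin n, G.Adj i j → twoSiteAct (m α) i j ψ = 0) ↔
      ((∀ σ : Equiv.Perm (Fin n), ∀ x : Fin n → Fin d, ψ (x ∘ σ) = ψ x) ∧
        ∀ α, twoSiteAct (m α) i₀ j₀ ψ = 0) :=
  stmt0_general G hG m hsym ψ i₀ j₀ hij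
end

section
/- Let L ≥ 1 and work in M_{2^L}(ℂ) ≅ M_2(ℂ)^{⊗L}. For each j ∈ {1,…,L} let Z_j denote the matrix acting as the Pauli matrix Z = diag(1, −1) on the j-th tensor factor and as the identity on all others, and set Z_tot = Z_1 + ⋯ + Z_L. Then the set of matrices X ∈ M_{2^L}(ℂ) that commute with every unitary U satisfying U Z_tot = Z_tot U is exactly the set of polynomials in Z_tot, i.e. the linear span of {Z_tot^n : 0 ≤ n ≤ L}. -/
/-!
`Z_tot` is diagonal in the computational basis, with eigenvalue `L - 2k` on a basis vector
with `k` entries equal to `1`. If `X` commutes with every unitary commuting with a diagonal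
matrix `D`, then the diagonal sign matrices force `X` to be diagonal, and the permutation
matrices of transpositions of basis vectors with the same eigenvalue force the diagonal of `X`
to be constant on each eigenspace. Lagrange interpolation at the (at most `L + 1`) eigenvalues
then writes `X` as a polynomial of degree at most `L` in `D`. Conversely, powers of `Z_tot`
commute with anything commuting with `Z_tot`.
-/

open Matrix

/-- The Pauli matrix `Z = diag(1, −1)`. -/
noncomputable def PauliZ : Matrix (Fin 2) (Fin 2) ℂ := !![1, 0; 0, -1]

/-- `Z_j = I^{⊗(j−1)} ⊗ Z ⊗ I^{⊗(L−j)}`: the Pauli matrix `Z` acting on the `j`-th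
tensor factor of `(ℂ²)^{⊗L}` and the identity on all other factors. -/
noncomputable def Zsite (L : ℕ) (j : Fin L) : Matrix (Fin L → Fin 2) (Fin L → Fin 2) ℂ :=
  fun x y => PauliZ (x j) (y j) * ∏ l ∈ Finset.univ.erase j, (if x l = y l then 1 else 0)

/-- `Z_tot = Σ_{j=1}^L Z_j`. -/
noncomputable def Ztot (L : ℕ) : Matrix (Fin L → Fin 2) (Fin L → Fin 2) ℂ :=
  ∑ j, Zsite L j

open Polynomial Finset

namespace Matrix

variable {n R : Type*} [Fintype n] [DecidableEq n]

lemma aeval_diagonal [CommSemiring R] (d : n → R) (p : R[X]) :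
    aeval (diagonal d) p = diagonal fun i => p.eval (d i) := by
  change aeval (diagonalAlgHom R d) p = _
  rw [aeval_algHom_apply, aeval_pi_apply]
  simp only [coe_aeval_eq_eval]
  rfl

lemma apply_eq_zero_of_commute_diagonal [CommRing R] [NoZeroDivisors R] {X : Matrix n n R}
    {u : n → R} (h : Commute X (diagonal u)) {a b : n} (hab : u a ≠ u b) : X a b = 0 := by
  have hab' := congrFun (congrFun h.eq a) b
  rw [mul_diagonal, diagonal_mul] at hab'
  have : (u b - u a) * X a b = 0 := by linear_combination hab'
  exact (mul_eq_zero.mp this).resolve_left (sub_ne_zero.mpr hab.symm)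

lemma apply_self_eq_of_commute_permMatrix [NonAssocSemiring R] {X : Matrix n n R}
    (σ : Equiv.Perm n) (h : Commute X (σ.permMatrix R)) (a : n) : X (σ a) (σ a) = X a a := by
  have := congrFun (congrFun h.eq a) (σ a)
  rw [PEquiv.mul_toMatrix_toPEquiv, PEquiv.toMatrix_toPEquiv_mul] at this
  simpa using this.symm

lemma permMatrix_mul_conjTranspose [Semiring R] [StarRing R] (σ : Equiv.Perm n) :
    σ.permMatrix R * (σ.permMatrix R)ᴴ = 1 := by
  rw [conjTranspose_permMatrix, ← permMatrix_mul, inv_mul_cancel, permMatrix_one]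

lemma permMatrix_commute_diagonal [NonAssocSemiring R] (σ : Equiv.Perm n) {d : n → R}
    (hd : ∀ a, d (σ a) = d a) : Commute (σ.permMatrix R) (diagonal d) := by
  rw [commute_iff_eq, PEquiv.mul_toMatrix_toPEquiv, PEquiv.toMatrix_toPEquiv_mul]
  ext i j
  simp only [submatrix_apply, id, diagonal_apply, Equiv.eq_symm_apply, hd]

lemma diagonal_mul_conjTranspose_eq_one [Semiring R] [StarRing R] {u : n → R}
    (hu : ∀ i, u i * star (u i) = 1) : diagonal u * (diagonal u)ᴴ = 1 := by
  rw [diagonal_conjTranspose, diagonal_mul_diagonal, ← diagonal_one]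
  exact congrArg diagonal (funext hu)

variable {𝕜 : Type*} [RCLike 𝕜]

lemma isDiag_of_commute_unitary_of_commute_diagonal {d : n → 𝕜} {X : Matrix n n 𝕜}
    (hX : ∀ U : Matrix n n 𝕜, U * Uᴴ = 1 → Commute U (diagonal d) → Commute X U) :
    X.IsDiag := by
  intro a b hab
  let u : n → 𝕜 := fun c => if c = a then -1 else 1
  refine apply_eq_zero_of_commute_diagonal (u := u) ?_ (by norm_num [u, hab.symm])
  refine hX _ (diagonal_mul_conjTranspose_eq_one fun c => ?_) (commute_diagonal _ _)
  by_cases hc : c = a <;> simp [u, hc]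

lemma apply_self_eq_of_commute_unitary_of_commute_diagonal {d : n → 𝕜} {X : Matrix n n 𝕜}
    (hX : ∀ U : Matrix n n 𝕜, U * Uᴴ = 1 → Commute U (diagonal d) → Commute X U)
    {a b : n} (hab : d a = d b) : X a a = X b b := by
  have hd : ∀ c, d (Equiv.swap a b c) = d c := by
    intro c
    rw [Equiv.swap_apply_def]
    split_ifs <;> simp_all
  have := apply_self_eq_of_commute_permMatrix _
    (hX _ (permMatrix_mul_conjTranspose _) (permMatrix_commute_diagonal _ hd)) a
  rwa [Equiv.swap_apply_left, eq_comm] at this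

theorem exists_degree_lt_eq_aeval_of_commute_unitary_of_commute_diagonal (d : n → 𝕜)
    {X : Matrix n n 𝕜}
    (hX : ∀ U : Matrix n n 𝕜, U * Uᴴ = 1 → Commute U (diagonal d) → Commute X U) :
    ∃ p : 𝕜[X], p.degree < #(univ.image d) ∧ X = aeval (diagonal d) p := by
  have hfac : (fun a => X a a).FactorsThrough d := fun a b hab =>
    apply_self_eq_of_commute_unitary_of_commute_diagonal hX hab
  refine ⟨Lagrange.interpolate (univ.image d) id (Function.extend d (fun a => X a a) 0),
    Lagrange.degree_interpolate_lt _ (Set.injOn_id _), ?_⟩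
  rw [aeval_diagonal]
  refine (isDiag_of_commute_unitary_of_commute_diagonal hX).diagonal_diag.symm.trans ?_
  congr 1
  ext a
  rw [← id_eq (d a), Lagrange.eval_interpolate_at_node _ (Set.injOn_id _)
    (mem_image_of_mem d (mem_univ a)), hfac.extend_apply]
  rfl

end Matrix

lemma Polynomial.aeval_mem_span_pow {R A : Type*} [CommSemiring R] [Semiring A] [Algebra R A]
    (x : A) {p : R[X]} {N : ℕ} (hp : p.natDegree ≤ N) :
    aeval x p ∈ Submodule.span R ((fun n : ℕ => x ^ n) '' {n | n ≤ N}) := by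
  rw [aeval_eq_sum_range]
  refine Submodule.sum_mem _ fun i hi => Submodule.smul_mem _ _ (Submodule.subset_span ?_)
  exact ⟨i, (Nat.lt_succ_iff.mp (mem_range.mp hi)).trans hp, rfl⟩

lemma PauliZ_eq_diagonal : PauliZ = diagonal ![1, -1] := by
  ext i j
  fin_cases i <;> fin_cases j <;> rfl

noncomputable def magnetization (L : ℕ) (x : Fin L → Fin 2) : ℂ := ∑ j, ![1, -1] (x j)

lemma Zsite_eq_diagonal (L : ℕ) (j : Fin L) :
    Zsite L j = diagonal fun x => ![1, -1] (x j) := by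
  ext x y
  by_cases hxy : x = y
  · subst hxy
    simp [Zsite, PauliZ_eq_diagonal]
  obtain ⟨l, hl⟩ := Function.ne_iff.mp hxy
  rw [diagonal_apply_ne _ hxy, Zsite]
  by_cases hlj : l = j
  · subst hlj
    rw [PauliZ_eq_diagonal, diagonal_apply_ne _ hl, zero_mul]
  · exact mul_eq_zero_of_right _ (prod_eq_zero (mem_erase.mpr ⟨hlj, mem_univ l⟩) (by simp [hl]))

lemma Ztot_eq_diagonal (L : ℕ) : Ztot L = diagonal (magnetization L) := by
  ext x y
  simp [Ztot, Zsite_eq_diagonal, Matrix.sum_apply, diagonal_apply, magnetization]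

lemma magnetization_eq (L : ℕ) (x : Fin L → Fin 2) :
    magnetization L x = L - 2 * #{j | x j = 1} := by
  have hZ : ∀ a : Fin 2, ![(1 : ℂ), -1] a = 1 - 2 * if a = 1 then 1 else 0 := by
    intro a
    fin_cases a <;> norm_num
  simp only [magnetization, hZ, sum_sub_distrib, ← mul_sum, sum_boole, sum_const, card_univ,
    Fintype.card_fin, nsmul_eq_mul, mul_one]

lemma card_image_magnetization_le (L : ℕ) :
    #(univ.image (magnetization L)) ≤ L + 1 := by
  have hsub : univ.image (magnetization L) ⊆
      (range (L + 1)).image fun k : ℕ => (L : ℂ) - 2 * k := by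
    intro m hm
    obtain ⟨x, -, rfl⟩ := mem_image.mp hm
    refine mem_image.mpr ⟨#{j | x j = 1}, mem_range.mpr ?_, (magnetization_eq L x).symm⟩
    exact Nat.lt_succ_of_le ((card_filter_le _ _).trans_eq (card_fin L))
  exact (card_le_card hsub).trans (card_image_le.trans (card_range _).le)

theorem stmt5_general {L : ℕ} :
    {X : Matrix (Fin L → Fin 2) (Fin L → Fin 2) ℂ |
        ∀ U : Matrix (Fin L → Fin 2) (Fin L → Fin 2) ℂ,
          U * Uᴴ = 1 → U * Ztot L = Ztot L * U → X * U = U * X}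
      = ↑(Submodule.span ℂ ((fun n : ℕ => Ztot L ^ n) '' {n : ℕ | n ≤ L})) := by
  ext X
  constructor
  · intro hX
    rw [Ztot_eq_diagonal] at hX ⊢
    obtain ⟨p, hp, rfl⟩ := exists_degree_lt_eq_aeval_of_commute_unitary_of_commute_diagonal _ hX
    refine aeval_mem_span_pow _ (natDegree_le_iff_degree_le.mpr (Order.le_of_lt_succ ?_))
    exact hp.trans_le (Nat.cast_le.mpr (card_image_magnetization_le L))
  · intro hX U _ hUZ
    have hspan : Submodule.span ℂ ((fun n : ℕ => Ztot L ^ n) '' {n : ℕ | n ≤ L}) ≤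
        Subalgebra.toSubmodule (Subalgebra.centralizer ℂ {U}) := by
      refine Submodule.span_le.mpr ?_
      rintro _ ⟨k, -, rfl⟩
      refine (Subalgebra.mem_centralizer_iff ℂ).mpr fun V hV => ?_
      rw [Set.mem_singleton_iff.mp hV]
      exact (Commute.pow_right (show Commute U (Ztot L) from hUZ) k).eq
    exact ((Subalgebra.mem_centralizer_iff ℂ).mp (hspan hX) U rfl).symm

/-- For `L ≥ 1`, the set of matrices `X ∈ M_{2^L}(ℂ)` that commute with every unitary
`U` commuting with `Z_tot` is exactly the linear span of `{Z_tot^n : 0 ≤ n ≤ L}`. -/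
theorem stmt5 {L : ℕ} (hL : 1 ≤ L) :
    {X : Matrix (Fin L → Fin 2) (Fin L → Fin 2) ℂ |
        ∀ U : Matrix (Fin L → Fin 2) (Fin L → Fin 2) ℂ,
          U * Uᴴ = 1 → U * Ztot L = Ztot L * U → X * U = U * X}
      = ↑(Submodule.span ℂ ((fun n : ℕ => Ztot L ^ n) '' {n : ℕ | n ≤ L})) :=
  stmt5_general
end

section
/- Let A be a unital associative ℂ-algebra and let γ : {1,2} × {1,…,2k} → A be a Majorana family, i.e. γ_{i,a} γ_{j,b} + γ_{j,b} γ_{i,a} = 2 δ_{ij} δ_{ab} · 1 for all i, j ∈ {1,2} and a, b ∈ {1,…,2k}. Define L = i · Σ_{a=1}^{2k} γ_{1,a} γ_{2,a} and J_m^{ab} = −(i/2) γ_{m,a} γ_{m,b} for m ∈ {1,2} and a ≠ b. Then L² = 2k · 1 − 8 · Σ_{1 ≤ a < b ≤ 2k} J_1^{ab} J_2^{ab}. -/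
/-!
With `P a = γ_{1,a} γ_{2,a}` and `Q a b = (γ_{1,a} γ_{1,b}) (γ_{2,a} γ_{2,b})`, anticommutation gives
`P a P b = -Q a b` for all `a, b`, where `Q a a = 1` and `Q` is symmetric. Hence
`(Σ P a)² = -2k - 2 Σ_{a<b} Q a b`; multiplying by `i² = -1` gives `L²`, while
`J₁ᵃᵇ J₂ᵃᵇ = -¼ Q a b`.
-/

open Finset

theorem Finset.sum_sum_eq_sum_diag_add_two_nsmul_sum_lt {ι M : Type*} [Fintype ι] [LinearOrder ι]
    [AddCommMonoid M] (g : ι → ι → M) (hg : ∀ a b, a ≠ b → g a b = g b a) :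
    ∑ a, ∑ b, g a b = ∑ a, g a a + 2 • ∑ a, ∑ b, if a < b then g a b else 0 := by
  have hsplit : ∀ a b, g a b
      = (if a = b then g a b else 0) + (if a < b then g a b else 0)
        + (if b < a then g a b else 0) := by
    intro a b
    rcases lt_trichotomy a b with h | rfl | h
    · simp [h, h.ne, h.not_gt]
    · simp
    · simp [h, h.ne', h.not_gt]
  have hswap : ∑ a, ∑ b, (if b < a then g a b else 0)
      = ∑ a, ∑ b, (if a < b then g a b else 0) := by
    rw [sum_comm]
    refine sum_congr rfl fun a _ => sum_congr rfl fun b _ => ?_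
    split_ifs with h
    · exact hg b a h.ne'
    · rfl
  rw [sum_congr rfl fun a _ => sum_congr rfl fun b _ => hsplit a b]
  simp only [sum_add_distrib, sum_ite_eq, mem_univ, if_true, hswap, two_nsmul, add_assoc]

def IsMajorana {ι A : Type*} [DecidableEq ι] [Ring A] (γ : ι → A) : Prop :=
  ∀ x y, γ x * γ y + γ y * γ x = if x = y then 2 else 0

namespace IsMajorana

variable {ι A : Type*} [DecidableEq ι] [Ring A]

theorem mul_eq_neg_mul_of_ne {γ : ι → A} (hγ : IsMajorana γ) {x y : ι} (h : x ≠ y) :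
    γ x * γ y = -(γ y * γ x) := by
  have := hγ x y
  rw [if_neg h] at this
  exact eq_neg_of_add_eq_zero_left this

theorem mul_self {γ : ι → A} (hγ : IsMajorana γ) (h2 : IsUnit (2 : A)) (x : ι) :
    γ x * γ x = 1 := by
  have h : 2 * (γ x * γ x) = 2 * 1 := by
    rw [two_mul, mul_one, hγ x x, if_pos rfl]
  exact h2.mul_left_cancel h

section Pairs

variable {γ : Fin 2 × ι → A}

theorem pair_mul_pair (hγ : IsMajorana γ) (a b : ι) :
    γ (0, a) * γ (1, a) * (γ (0, b) * γ (1, b))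
      = -(γ (0, a) * γ (0, b) * (γ (1, a) * γ (1, b))) := by
  have h : γ (1, a) * γ (0, b) = -(γ (0, b) * γ (1, a)) := hγ.mul_eq_neg_mul_of_ne (by simp)
  rw [mul_assoc, ← mul_assoc (γ (1, a)), h]
  simp only [neg_mul, mul_neg, mul_assoc]

theorem cross_symm (hγ : IsMajorana γ) {a b : ι} (hab : a ≠ b) :
    γ (0, a) * γ (0, b) * (γ (1, a) * γ (1, b))
      = γ (0, b) * γ (0, a) * (γ (1, b) * γ (1, a)) := by
  rw [hγ.mul_eq_neg_mul_of_ne (x := (0, a)) (by simpa using hab),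
    hγ.mul_eq_neg_mul_of_ne (x := (1, a)) (by simpa using hab), neg_mul_neg]

theorem sq_sum_pair [Fintype ι] [LinearOrder ι] (hγ : IsMajorana γ) (h2 : IsUnit (2 : A)) :
    (∑ a, γ (0, a) * γ (1, a)) ^ 2
      = -((Fintype.card ι : A) + 2 • ∑ a, ∑ b,
          if a < b then γ (0, a) * γ (0, b) * (γ (1, a) * γ (1, b)) else 0) := by
  rw [sq, sum_mul_sum]
  simp_rw [hγ.pair_mul_pair, sum_neg_distrib]
  rw [sum_sum_eq_sum_diag_add_two_nsmul_sum_lt _ fun a b hab => hγ.cross_symm hab]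
  simp only [hγ.mul_self h2, one_mul, sum_const, card_univ, nsmul_one]

end Pairs

end IsMajorana

theorem stmt7_general {A : Type*} [Ring A] [Algebra ℂ A] {k : ℕ}
    (γ : Fin 2 → Fin (2 * k) → A)
    (hγ : ∀ (i j : Fin 2) (a b : Fin (2 * k)),
      γ i a * γ j b + γ j b * γ i a = if i = j ∧ a = b then 2 else 0) :
    (Complex.I • (∑ a, γ 0 a * γ 1 a)) ^ 2
      = (2 * (k : ℂ)) • (1 : A)
        - (8 : ℂ) • ∑ a : Fin (2 * k), ∑ b : Fin (2 * k),
            (if a < b then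
              ((-(Complex.I / 2)) • (γ 0 a * γ 0 b)) * ((-(Complex.I / 2)) • (γ 1 a * γ 1 b))
            else 0) := by
  have hmaj : IsMajorana fun p : Fin 2 × Fin (2 * k) => γ p.1 p.2 :=
    fun p q => by simpa only [Prod.ext_iff] using hγ p.1 q.1 p.2 q.2
  have h2 : IsUnit (2 : A) := by
    rw [← map_ofNat (algebraMap ℂ A) 2]
    exact (IsUnit.mk0 (2 : ℂ) two_ne_zero).map _
  have hJ : ∀ a b : Fin (2 * k),
      (if a < b then
        ((-(Complex.I / 2)) • (γ 0 a * γ 0 b)) * ((-(Complex.I / 2)) • (γ 1 a * γ 1 b))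
      else 0)
        = (-(1 / 4) : ℂ) • if a < b then γ 0 a * γ 0 b * (γ 1 a * γ 1 b) else 0 := by
    intro a b
    rw [smul_ite, smul_zero, smul_mul_smul_comm]
    congr 2
    linear_combination (1 / 4 : ℂ) * Complex.I_sq
  have hcard : (2 * (k : ℂ)) • (1 : A) = (Fintype.card (Fin (2 * k)) : A) := by
    simpa using Nat.cast_smul_eq_nsmul ℂ (2 * k) (1 : A)
  simp_rw [hJ, ← smul_sum, smul_smul, smul_pow, Complex.I_sq, hcard]
  rw [hmaj.sq_sum_pair h2, neg_one_smul, neg_neg, show (8 * -(1 / 4) : ℂ) = -2 by norm_num, neg_smul, sub_neg_eq_add,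
    two_smul ℂ, two_nsmul]

/-- Let `A` be a unital associative ℂ-algebra and `γ : Fin 2 × Fin (2k) → A` a Majorana
family: `γ_{i,a} γ_{j,b} + γ_{j,b} γ_{i,a} = 2 δ_{ij} δ_{ab} · 1`.  With
`L = i Σ_a γ_{1,a} γ_{2,a}` and `J_m^{ab} = −(i/2) γ_{m,a} γ_{m,b}` (for `a ≠ b`):
`L² = 2k · 1 − 8 Σ_{a<b} J_1^{ab} J_2^{ab}`. -/
theorem stmt7 {A : Type*} [Ring A] [Algebra ℂ A] {k : ℕ} (hk : 1 ≤ k)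
    (γ : Fin 2 → Fin (2 * k) → A)
    (hγ : ∀ (i j : Fin 2) (a b : Fin (2 * k)),
      γ i a * γ j b + γ j b * γ i a = if i = j ∧ a = b then 2 else 0) :
    (Complex.I • (∑ a, γ 0 a * γ 1 a)) ^ 2
      = (2 * (k : ℂ)) • (1 : A)
        - (8 : ℂ) • ∑ a : Fin (2 * k), ∑ b : Fin (2 * k),
            (if a < b then
              ((-(Complex.I / 2)) • (γ 0 a * γ 0 b)) * ((-(Complex.I / 2)) • (γ 1 a * γ 1 b))
            else 0) :=
  stmt7_general γ hγ
end

section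
/- Let A be a unital associative ℂ-algebra, let k, L ≥ 1, and let γ̃ : {1,…,2k} × {1,…,2L} → A (with γ̃_i^a denoting the element with replica index a and mode index i) satisfy: for each fixed a, γ̃_i^a γ̃_j^a + γ̃_j^a γ̃_i^a = 2 δ_{ij} · 1 for all i, j; and for a ≠ b, γ̃_i^a γ̃_j^b = γ̃_j^b γ̃_i^a for all i, j. Define the Klein factors Γ̃^b = (−i)^L · γ̃_1^b γ̃_2^b ⋯ γ̃_{2L}^b and the dressed modes γ̄_i^a = (∏_{b=1}^{a−1} Γ̃^b) · γ̃_i^a (product in increasing order of b). Then the dressed modes form a Majorana family: γ̄_i^a γ̄_j^b + γ̄_j^b γ̄_i^a = 2 δ_{ab} δ_{ij} · 1 for all a, b ∈ {1,…,2k} and i, j ∈ {1,…,2L}. -/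
/-!
A mode `γ̃_i^a` commutes with itself and anticommutes with the other `2L - 1` modes of its
replica, so it anticommutes with `Γ̃^a`; it commutes with every other Klein factor. The Klein
factors commute pairwise and square to `1`: reversing a product of `2L` Majorana modes costs
`(-1)^(2L choose 2) = (-1)^L`, which the prefactor `(-i)^L` cancels. Hence the string
`S_a = ∏_{b<a} Γ̃^b` squares to `1` and commutes with the modes of replica `a`, so
`γ̄_i^a γ̄_j^a = γ̃_i^a γ̃_j^a`; for `a < b` the string `S_b` contains `Γ̃^a` exactly once, so
`γ̃^a` anticommutes with it and the mixed anticommutator vanishes.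
-/

/-- The Klein factor `Γ̃^b = (−i)^L · γ̃_1^b γ̃_2^b ⋯ γ̃_{2L}^b`: the ordered product of
all `2L` modes of replica `b`, with prefactor `(−i)^L`. -/
noncomputable def kleinFactor {A : Type*} [Ring A] [Algebra ℂ A] {k L : ℕ}
    (γ : Fin (2 * k) → Fin (2 * L) → A) (b : Fin (2 * k)) : A :=
  ((-Complex.I) ^ L) • ((List.finRange (2 * L)).map (γ b)).prod

/-- The dressed mode `γ̄_i^a = (∏_{b=1}^{a−1} Γ̃^b) · γ̃_i^a`, the product over `b < a`
being taken in increasing order of `b`. -/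
noncomputable def dressedMode {A : Type*} [Ring A] [Algebra ℂ A] {k L : ℕ}
    (γ : Fin (2 * k) → Fin (2 * L) → A) (a : Fin (2 * k)) (i : Fin (2 * L)) : A :=
  (((List.finRange (2 * k)).filter (fun b => decide (b < a))).map (kleinFactor γ)).prod
    * γ a i

theorem mul_list_prod_map_eq_units_smul {R ι : Type*} [Ring R] (x : R) (f : ι → R)
    (ε : ι → ℤˣ) (l : List ι) (h : ∀ j ∈ l, x * f j = ε j • (f j * x)) :
    x * (l.map f).prod = (l.map ε).prod • ((l.map f).prod * x) := by
  induction l with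
  | nil => simp
  | cons j l ih =>
    rw [List.forall_mem_cons] at h
    simp only [List.map_cons, List.prod_cons]
    rw [← mul_assoc, h.1, smul_mul_assoc, mul_assoc, ih h.2, mul_smul_comm, smul_smul,
      ← mul_assoc]

theorem List.prod_mul_self_eq_one_of_commute {M : Type*} [Monoid M] (l : List M)
    (hcomm : ∀ x ∈ l, ∀ y ∈ l, Commute x y) (hsq : ∀ x ∈ l, x * x = 1) :
    l.prod * l.prod = 1 := by
  induction l with
  | nil => simp
  | cons x l ih =>
    simp only [List.forall_mem_cons] at hcomm hsq
    have hxl : Commute l.prod x :=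
      (Commute.list_prod_right l x fun y hy => hcomm.1.2 y hy).symm
    rw [List.prod_cons, hxl.mul_mul_mul_comm, hsq.1, one_mul,
      ih (fun y hy => (hcomm.2 y hy).2) hsq.2]

def IsMajoranaFamily {ι A : Type*} [Ring A] [DecidableEq ι] (c : ι → A) : Prop :=
  ∀ i j, c i * c j + c j * c i = if i = j then 2 else 0

namespace IsMajoranaFamily

variable {ι A : Type*} [Ring A] [DecidableEq ι] {c : ι → A}

theorem mul_self (hc : IsMajoranaFamily c) (h2 : IsUnit (2 : A)) (i : ι) : c i * c i = 1 :=
  h2.mul_left_cancel (by rw [two_mul, hc i i, if_pos rfl, mul_one])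

theorem mul_eq_neg_mul (hc : IsMajoranaFamily c) {i j : ι} (hij : i ≠ j) :
    c i * c j = -(c j * c i) :=
  eq_neg_of_add_eq_zero_left (by rw [hc i j, if_neg hij])

theorem mul_list_prod_of_not_mem (hc : IsMajoranaFamily c) {i : ι} {l : List ι} (hi : i ∉ l) :
    c i * (l.map c).prod = (-1) ^ l.length * ((l.map c).prod * c i) := by
  have hanti : ∀ j ∈ l, c i * c j = (fun _ => (-1 : ℤˣ)) j • (c j * c i) := fun j hj => by
    rw [hc.mul_eq_neg_mul (ne_of_mem_of_not_mem hj hi).symm, Units.neg_smul, one_smul]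
  rw [mul_list_prod_map_eq_units_smul (c i) c _ l hanti, List.map_const', List.prod_replicate,
    Units.smul_def, zsmul_eq_mul]
  push_cast
  rfl

theorem list_prod_mul_self (hc : IsMajoranaFamily c) (h2 : IsUnit (2 : A)) {l : List ι}
    (hl : l.Nodup) : (l.map c).prod * (l.map c).prod = (-1) ^ l.length.choose 2 := by
  induction l with
  | nil => simp
  | cons i l ih =>
    rw [List.nodup_cons] at hl
    set P := (l.map c).prod
    calc c i * P * (c i * P) = (c i * P) * c i * P := by simp only [mul_assoc]
      _ = (-1) ^ l.length * (P * P) := by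
        rw [hc.mul_list_prod_of_not_mem hl.1, mul_assoc, mul_assoc, mul_assoc, ← mul_assoc (c i),
          hc.mul_self h2, one_mul]
      _ = (-1) ^ (l.length + 1).choose 2 := by
        rw [ih hl.2, ← pow_add, Nat.choose_succ_succ', Nat.choose_one_right]

theorem mul_list_prod_of_mem (hc : IsMajoranaFamily c) {i : ι} {l : List ι} (hl : l.Nodup)
    (hi : i ∈ l) (heven : Even l.length) :
    c i * (l.map c).prod = -((l.map c).prod * c i) := by
  set ε : ι → ℤˣ := fun j => if j = i then 1 else -1
  have hsign : (l.map ε).prod = -1 := by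
    have hodd : Odd (l.erase i).length := by
      rw [List.length_erase_of_mem hi]
      exact Nat.Even.sub_odd (List.length_pos_of_mem hi) heven odd_one
    rw [((List.perm_cons_erase hi).map ε).prod_eq, List.map_cons, List.prod_cons,
      List.map_congr_left (f := ε) (g := fun _ => -1), List.map_const', List.prod_replicate,
      hodd.neg_one_pow]
    · simp [ε]
    · intro j hj
      simp [ε, ne_of_mem_of_not_mem hj (hl.not_mem_erase)]
  have hanti : ∀ j ∈ l, c i * c j = ε j • (c j * c i) := fun j _ => by
    by_cases hji : j = i
    · simp [ε, hji]
    · simp [ε, hji, hc.mul_eq_neg_mul (Ne.symm hji)]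
  rw [mul_list_prod_map_eq_units_smul (c i) c ε l hanti, hsign, Units.neg_smul, one_smul]

end IsMajoranaFamily

section Replicas

variable {A : Type*} [Ring A] [Algebra ℂ A] {k L : ℕ} {γ : Fin (2 * k) → Fin (2 * L) → A}

theorem kleinFactor_mul_self (hγ : ∀ a, IsMajoranaFamily (γ a)) (b : Fin (2 * k)) :
    kleinFactor γ b * kleinFactor γ b = 1 := by
  have h2 : IsUnit (2 : A) := by
    have h := (IsUnit.mk0 (2 : ℂ) two_ne_zero).map (algebraMap ℂ A)
    rwa [map_ofNat] at h
  have hchoose : (2 * L).choose 2 = L + 2 * (L * (L - 1)) := by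
    rw [Nat.choose_two_right]
    rcases L with _ | L
    · rfl
    · rw [Nat.add_sub_cancel, show 2 * (L + 1) - 1 = 2 * L + 1 by omega, mul_assoc,
        Nat.mul_div_cancel_left _ two_pos]
      ring
  rw [kleinFactor, smul_mul_smul_comm, (hγ b).list_prod_mul_self h2 (List.nodup_finRange _),
    List.length_finRange, hchoose, pow_add, pow_mul, neg_one_sq, one_pow, mul_one]
  rw [← mul_pow, neg_mul_neg, Complex.I_mul_I, Algebra.smul_def, map_pow, map_neg, map_one,
    ← pow_add, Even.neg_one_pow ⟨L, rfl⟩]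

theorem mul_kleinFactor_self (hγ : ∀ a, IsMajoranaFamily (γ a)) (a : Fin (2 * k))
    (i : Fin (2 * L)) : γ a i * kleinFactor γ a = -(kleinFactor γ a * γ a i) := by
  rw [kleinFactor, mul_smul_comm, (hγ a).mul_list_prod_of_mem (List.nodup_finRange _)
    (List.mem_finRange i) (by simp), smul_neg, smul_mul_assoc]

theorem commute_kleinFactor_of_ne
    (hcomm : ∀ a b, a ≠ b → ∀ i j, Commute (γ a i) (γ b j)) {a b : Fin (2 * k)} (hab : a ≠ b)
    (i : Fin (2 * L)) : Commute (γ a i) (kleinFactor γ b) :=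
  (Commute.list_prod_right _ _ <| List.forall_mem_map.2 fun j _ => hcomm a b hab i j).smul_right _

theorem commute_kleinFactor_kleinFactor
    (hcomm : ∀ a b, a ≠ b → ∀ i j, Commute (γ a i) (γ b j)) (a b : Fin (2 * k)) :
    Commute (kleinFactor γ a) (kleinFactor γ b) := by
  rcases eq_or_ne a b with rfl | hab
  · rfl
  · refine ((Commute.list_prod_left _ _ ?_).smul_left _)
    exact List.forall_mem_map.2 fun i _ => commute_kleinFactor_of_ne hcomm hab i

noncomputable def kleinString (γ : Fin (2 * k) → Fin (2 * L) → A) (a : Fin (2 * k)) : A :=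
  (((List.finRange (2 * k)).filter (fun b => decide (b < a))).map (kleinFactor γ)).prod

theorem dressedMode_eq_kleinString_mul (a : Fin (2 * k)) (i : Fin (2 * L)) :
    dressedMode γ a i = kleinString γ a * γ a i :=
  rfl

theorem kleinString_mul_self (hγ : ∀ a, IsMajoranaFamily (γ a))
    (hcomm : ∀ a b, a ≠ b → ∀ i j, Commute (γ a i) (γ b j)) (a : Fin (2 * k)) :
    kleinString γ a * kleinString γ a = 1 :=
  List.prod_mul_self_eq_one_of_commute _
    (List.forall_mem_map.2 fun b _ => List.forall_mem_map.2 fun c _ =>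
      commute_kleinFactor_kleinFactor hcomm b c)
    (List.forall_mem_map.2 fun b _ => kleinFactor_mul_self hγ b)

theorem commute_kleinString_kleinString
    (hcomm : ∀ a b, a ≠ b → ∀ i j, Commute (γ a i) (γ b j)) (a b : Fin (2 * k)) :
    Commute (kleinString γ a) (kleinString γ b) :=
  Commute.list_prod_left _ _ <| List.forall_mem_map.2 fun c _ =>
    Commute.list_prod_right _ _ <| List.forall_mem_map.2 fun d _ =>
      commute_kleinFactor_kleinFactor hcomm c d

theorem commute_kleinString_of_le (hcomm : ∀ a b, a ≠ b → ∀ i j, Commute (γ a i) (γ b j))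
    {a c : Fin (2 * k)} (hca : c ≤ a) (i : Fin (2 * L)) :
    Commute (γ a i) (kleinString γ c) :=
  Commute.list_prod_right _ _ <| List.forall_mem_map.2 fun b hb =>
    commute_kleinFactor_of_ne hcomm
      (ne_of_gt (lt_of_lt_of_le (by simpa using (List.mem_filter.1 hb).2) hca)) i

theorem mul_kleinString_of_lt (hγ : ∀ a, IsMajoranaFamily (γ a))
    (hcomm : ∀ a b, a ≠ b → ∀ i j, Commute (γ a i) (γ b j))
    {a c : Fin (2 * k)} (hac : a < c) (i : Fin (2 * L)) :
    γ a i * kleinString γ c = -(kleinString γ c * γ a i) := by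
  set ε : Fin (2 * k) → ℤˣ := fun b => if b = a then -1 else 1
  have hsign : ∀ b, γ a i * kleinFactor γ b = ε b • (kleinFactor γ b * γ a i) := fun b => by
    by_cases hba : b = a
    · simp [ε, hba, mul_kleinFactor_self hγ]
    · simp [ε, hba, (commute_kleinFactor_of_ne hcomm (Ne.symm hba) i).eq]
  have hcount : ((List.finRange (2 * k)).filter (fun b => decide (b < c))).count a = 1 :=
    List.count_eq_one_of_mem ((List.nodup_finRange _).filter _) (by simpa using hac)
  rw [kleinString, mul_list_prod_map_eq_units_smul _ _ ε _ fun b _ => hsign b,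
    List.prod_map_eq_pow_single a ε fun b hba _ => if_neg hba, hcount, pow_one]
  simp [ε]

theorem dressedMode_mul_dressedMode_self (hγ : ∀ a, IsMajoranaFamily (γ a))
    (hcomm : ∀ a b, a ≠ b → ∀ i j, Commute (γ a i) (γ b j)) (a : Fin (2 * k))
    (i j : Fin (2 * L)) : dressedMode γ a i * dressedMode γ a j = γ a i * γ a j := by
  rw [dressedMode_eq_kleinString_mul, dressedMode_eq_kleinString_mul, mul_assoc,
    ← mul_assoc (γ a i), (commute_kleinString_of_le hcomm le_rfl i).eq, mul_assoc,
    ← mul_assoc, kleinString_mul_self hγ hcomm, one_mul]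

theorem dressedMode_anticomm_of_lt (hγ : ∀ a, IsMajoranaFamily (γ a))
    (hcomm : ∀ a b, a ≠ b → ∀ i j, Commute (γ a i) (γ b j)) {a b : Fin (2 * k)} (hab : a < b)
    (i j : Fin (2 * L)) :
    dressedMode γ a i * dressedMode γ b j + dressedMode γ b j * dressedMode γ a i = 0 := by
  set Ka := kleinString γ a
  set Kb := kleinString γ b
  have hab' : dressedMode γ a i * dressedMode γ b j = -(Ka * Kb * (γ a i * γ b j)) := by
    rw [dressedMode_eq_kleinString_mul, dressedMode_eq_kleinString_mul, mul_assoc,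
      ← mul_assoc (γ a i), mul_kleinString_of_lt hγ hcomm hab]
    noncomm_ring
  have hba : dressedMode γ b j * dressedMode γ a i = Ka * Kb * (γ a i * γ b j) := by
    rw [dressedMode_eq_kleinString_mul, dressedMode_eq_kleinString_mul, mul_assoc,
      ← mul_assoc (γ b j), (commute_kleinString_of_le hcomm hab.le j).eq,
      (hcomm a b hab.ne i j).eq, (commute_kleinString_kleinString hcomm a b).eq]
    noncomm_ring
  rw [hab', hba, neg_add_cancel]

theorem isMajoranaFamily_dressedMode (hγ : ∀ a, IsMajoranaFamily (γ a))
    (hcomm : ∀ a b, a ≠ b → ∀ i j, Commute (γ a i) (γ b j)) :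
    IsMajoranaFamily fun p : Fin (2 * k) × Fin (2 * L) => dressedMode γ p.1 p.2 := by
  rintro ⟨a, i⟩ ⟨b, j⟩
  rcases lt_trichotomy a b with hab | rfl | hba
  · rw [if_neg (by simp [hab.ne])]
    exact dressedMode_anticomm_of_lt hγ hcomm hab i j
  · simpa [dressedMode_mul_dressedMode_self hγ hcomm] using hγ a i j
  · rw [if_neg (by simp [hba.ne']), add_comm]
    exact dressedMode_anticomm_of_lt hγ hcomm hba j i

end Replicas

theorem stmt10_general {A : Type*} [Ring A] [Algebra ℂ A] {k L : ℕ}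
    (γ : Fin (2 * k) → Fin (2 * L) → A)
    (hsame : ∀ (a : Fin (2 * k)) (i j : Fin (2 * L)),
      γ a i * γ a j + γ a j * γ a i = if i = j then 2 else 0)
    (hdiff : ∀ (a b : Fin (2 * k)), a ≠ b → ∀ (i j : Fin (2 * L)),
      γ a i * γ b j = γ b j * γ a i) :
    ∀ (a b : Fin (2 * k)) (i j : Fin (2 * L)),
      dressedMode γ a i * dressedMode γ b j + dressedMode γ b j * dressedMode γ a i
        = if a = b ∧ i = j then 2 else 0 := by
  intro a b i j
  simpa using isMajoranaFamily_dressedMode hsame hdiff (a, i) (b, j)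

/-- Let `A` be a unital associative ℂ-algebra, `k, L ≥ 1`, and
`γ̃ : Fin (2k) × Fin (2L) → A` (replica index first) satisfy: within each replica the
modes anticommute like Majorana modes, and modes on different replicas commute.  Then
the Klein-dressed modes `γ̄_i^a` form a genuine Majorana family:
`γ̄_i^a γ̄_j^b + γ̄_j^b γ̄_i^a = 2 δ_{ab} δ_{ij} · 1`. -/
theorem stmt10 {A : Type*} [Ring A] [Algebra ℂ A] {k L : ℕ} (hk : 1 ≤ k) (hL : 1 ≤ L)
    (γ : Fin (2 * k) → Fin (2 * L) → A)
    (hsame : ∀ (a : Fin (2 * k)) (i j : Fin (2 * L)),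
      γ a i * γ a j + γ a j * γ a i = if i = j then 2 else 0)
    (hdiff : ∀ (a b : Fin (2 * k)), a ≠ b → ∀ (i j : Fin (2 * L)),
      γ a i * γ b j = γ b j * γ a i) :
    ∀ (a b : Fin (2 * k)) (i j : Fin (2 * L)),
      dressedMode γ a i * dressedMode γ b j + dressedMode γ b j * dressedMode γ a i
        = if a = b ∧ i = j then 2 else 0 :=
  stmt10_general γ hsame hdiff
end

section
/- Let k ≥ 1 and n ≥ 1. Let w : {1,…,n} → ℝ^k be such that every coordinate of every w_i lies in {−1/2, +1/2}, and let ρ ∈ ℝ^k be the vector with coordinates ρ_m = k − m for m = 1,…,k. Define F(w) = ‖Σ_{i=1}^n w_i‖² + 2 ⟨Σ_{i=1}^n w_i, ρ⟩, where ‖·‖ and ⟨·,·⟩ are the standard Euclidean norm and inner product on ℝ^k. Then F(w) ≤ n² k / 4 + n k (k−1) / 2, and equality holds if and only if there exists s ∈ {−1/2, +1/2} such that for every i: w_i(m) = 1/2 for all m ≤ k−1 and w_i(k) = s (in particular all w_i are equal). -/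
/-!
Write `S m = ∑ᵢ wᵢ(m)` for the column sums, so `|S m| ≤ n/2`, and `ρ m ≥ 0`. The objective splits
over coordinates into `S² + 2 S ρ`, and `a² + 2aρ - (S² + 2Sρ) = (a - S)(a + S + 2ρ)` with
`a = n/2` is a product of two nonnegative factors. Summing the bounds `S² + 2Sρ ≤ a² + 2aρ` gives
the inequality; equality forces every column to attain `S = n/2` (all entries `1/2`), except that
the last column, where `ρ = 0`, may also attain `S = -n/2` (all entries `-1/2`).
-/

open Finset

section Quadratic

variable {S a r : ℝ}

lemma sq_add_two_mul_le_of_abs_le (hS : |S| ≤ a) (hr : 0 ≤ r) :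
    S ^ 2 + 2 * (S * r) ≤ a ^ 2 + 2 * (a * r) := by
  obtain ⟨hlo, hhi⟩ := abs_le.mp hS
  nlinarith [mul_nonneg (sub_nonneg.mpr hhi) (by linarith : 0 ≤ a + S + 2 * r)]

lemma sq_add_two_mul_eq_iff_of_abs_le (hS : |S| ≤ a) (hr : 0 ≤ r) :
    S ^ 2 + 2 * (S * r) = a ^ 2 + 2 * (a * r) ↔ S = a ∨ (r = 0 ∧ S = -a) := by
  obtain ⟨hlo, hhi⟩ := abs_le.mp hS
  constructor
  · intro h
    have hfac : (a - S) * (a + S + 2 * r) = 0 := by linear_combination -h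
    rcases mul_eq_zero.mp hfac with h | h
    · exact .inl (by linarith)
    · exact .inr ⟨by linarith, by linarith⟩
  · rintro (rfl | ⟨rfl, rfl⟩) <;> ring

end Quadratic

section SumOfQuadratics

variable {ι : Type*} (s : Finset ι) {S r : ι → ℝ} {a : ℝ}

lemma sum_sq_add_two_mul_sum_le (hS : ∀ m ∈ s, |S m| ≤ a) (hr : ∀ m ∈ s, 0 ≤ r m) :
    ∑ m ∈ s, S m ^ 2 + 2 * ∑ m ∈ s, S m * r m ≤ ∑ m ∈ s, (a ^ 2 + 2 * (a * r m)) := by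
  rw [mul_sum, ← sum_add_distrib]
  exact sum_le_sum fun m hm ↦ sq_add_two_mul_le_of_abs_le (hS m hm) (hr m hm)

lemma sum_sq_add_two_mul_sum_eq_iff (hS : ∀ m ∈ s, |S m| ≤ a) (hr : ∀ m ∈ s, 0 ≤ r m) :
    ∑ m ∈ s, S m ^ 2 + 2 * ∑ m ∈ s, S m * r m = ∑ m ∈ s, (a ^ 2 + 2 * (a * r m)) ↔
      ∀ m ∈ s, S m = a ∨ (r m = 0 ∧ S m = -a) := by
  rw [mul_sum, ← sum_add_distrib,
    sum_eq_sum_iff_of_le fun m hm ↦ sq_add_two_mul_le_of_abs_le (hS m hm) (hr m hm)]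
  exact forall₂_congr fun m hm ↦ sq_add_two_mul_eq_iff_of_abs_le (hS m hm) (hr m hm)

end SumOfQuadratics

section ColumnSums

variable {ι : Type*} (s : Finset ι) {f : ι → ℝ} {c : ℝ}

lemma abs_sum_le_card_mul (h : ∀ i ∈ s, |f i| ≤ c) : |∑ i ∈ s, f i| ≤ #s * c :=
  (abs_sum_le_sum_abs f s).trans <| by simpa using sum_le_card_nsmul s _ c h

lemma sum_eq_card_mul_iff_of_le (h : ∀ i ∈ s, f i ≤ c) :
    ∑ i ∈ s, f i = #s * c ↔ ∀ i ∈ s, f i = c := by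
  simpa using sum_eq_sum_iff_of_le h

lemma sum_eq_card_mul_iff_of_ge (h : ∀ i ∈ s, c ≤ f i) :
    ∑ i ∈ s, f i = #s * c ↔ ∀ i ∈ s, f i = c := by
  simpa [eq_comm] using sum_eq_sum_iff_of_le h

end ColumnSums

lemma sum_range_natCast (k : ℕ) : ∑ i ∈ range k, (i : ℝ) = k * (k - 1) / 2 := by
  induction k with
  | zero => simp
  | succ k ih =>
    rw [sum_range_succ, ih]
    push_cast
    ring

lemma sum_weylCoord (k : ℕ) : ∑ m : Fin k, ((k : ℝ) - 1 - (m : ℕ)) = k * (k - 1) / 2 := by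
  rw [sum_sub_distrib, Fin.sum_univ_eq_sum_range (fun i ↦ (i : ℝ)), sum_range_natCast]
  simp only [sum_const, card_univ, Fintype.card_fin, nsmul_eq_mul]
  ring

lemma weylCoord_nonneg {k : ℕ} (m : Fin k) : 0 ≤ (k : ℝ) - 1 - (m : ℕ) := by
  have : ((m : ℕ) : ℝ) + 1 ≤ k := by exact_mod_cast m.is_lt
  linarith

lemma weylCoord_eq_zero_iff {k : ℕ} (m : Fin k) : (k : ℝ) - 1 - (m : ℕ) = 0 ↔ (m : ℕ) = k - 1 := by
  have := m.is_lt
  rw [sub_eq_zero, sub_eq_iff_eq_add, ← Nat.cast_add_one, Nat.cast_inj]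
  omega

lemma forall_columns_iff {k n : ℕ} (hk : 1 ≤ k) (w : Fin n → Fin k → ℝ) :
    (∀ m : Fin k, (∀ i, w i m = 1 / 2) ∨ ((m : ℕ) = k - 1 ∧ ∀ i, w i m = -(1 / 2))) ↔
      ∃ s : ℝ, (s = 1 / 2 ∨ s = -(1 / 2)) ∧
        ∀ i, (∀ m : Fin k, (m : ℕ) < k - 1 → w i m = 1 / 2) ∧
          w i ⟨k - 1, Nat.sub_one_lt_of_le hk le_rfl⟩ = s := by
  constructor
  · intro h
    have hfront : ∀ m : Fin k, (m : ℕ) < k - 1 → ∀ i, w i m = 1 / 2 := fun m hm ↦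
      (h m).resolve_right fun hlast ↦ hm.ne hlast.1
    rcases h ⟨k - 1, Nat.sub_one_lt_of_le hk le_rfl⟩ with hpos | ⟨-, hneg⟩
    · exact ⟨1 / 2, .inl rfl, fun i ↦ ⟨fun m hm ↦ hfront m hm i, hpos i⟩⟩
    · exact ⟨-(1 / 2), .inr rfl, fun i ↦ ⟨fun m hm ↦ hfront m hm i, hneg i⟩⟩
  · rintro ⟨s, hs, hws⟩ m
    by_cases hm : (m : ℕ) < k - 1
    · exact .inl fun i ↦ (hws i).1 m hm
    have hlast : m = ⟨k - 1, Nat.sub_one_lt_of_le hk le_rfl⟩ :=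
      Fin.ext (by have := m.is_lt; simp only; omega)
    rw [hlast]
    rcases hs with rfl | rfl
    · exact .inl fun i ↦ (hws i).2
    · exact .inr ⟨rfl, fun i ↦ (hws i).2⟩

/-- Weight-maximization for the `so(2k)` spinor weights.  Let `k, n ≥ 1` and let
`w : Fin n → ℝ^k` have all coordinates in `{−1/2, +1/2}`.  With the Weyl vector
`ρ_m = k − m` (for `m = 1, …, k`, i.e. `ρ m = k − 1 − m` in `0`-indexed form) and
`F(w) = ‖Σᵢ wᵢ‖² + 2⟨Σᵢ wᵢ, ρ⟩` (standard Euclidean norm and inner product written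
in coordinates), we have `F(w) ≤ n²k/4 + nk(k−1)/2`, with equality iff there is
`s ∈ {−1/2, +1/2}` such that for every `i`: `wᵢ(m) = 1/2` for all `m ≤ k−1` and
`wᵢ(k) = s` (in particular all `wᵢ` are equal). -/
theorem stmt15 {k n : ℕ} (hk : 1 ≤ k)
    (w : Fin n → Fin k → ℝ)
    (hw : ∀ i m, w i m = 1 / 2 ∨ w i m = -(1 / 2)) :
    (∑ m : Fin k, (∑ i, w i m) ^ 2)
        + 2 * (∑ m : Fin k, (∑ i, w i m) * ((k : ℝ) - 1 - ((m : ℕ) : ℝ)))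
      ≤ (n : ℝ) ^ 2 * k / 4 + (n : ℝ) * k * ((k : ℝ) - 1) / 2
    ∧ ((∑ m : Fin k, (∑ i, w i m) ^ 2)
          + 2 * (∑ m : Fin k, (∑ i, w i m) * ((k : ℝ) - 1 - ((m : ℕ) : ℝ)))
        = (n : ℝ) ^ 2 * k / 4 + (n : ℝ) * k * ((k : ℝ) - 1) / 2
      ↔ ∃ s : ℝ, (s = 1 / 2 ∨ s = -(1 / 2)) ∧
          ∀ i, (∀ m : Fin k, (m : ℕ) < k - 1 → w i m = 1 / 2)
            ∧ w i ⟨k - 1, by omega⟩ = s) := by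
  have hentry : ∀ i m, |w i m| ≤ 1 / 2 := fun i m ↦ by rcases hw i m with h | h <;> norm_num [h]
  have hcol : ∀ m, |∑ i, w i m| ≤ n / 2 := fun m ↦ by
    simpa [div_eq_mul_inv] using abs_sum_le_card_mul univ (f := (w · m)) fun i _ ↦ hentry i m
  have hpos : ∀ m, ∑ i, w i m = n / 2 ↔ ∀ i, w i m = 1 / 2 := fun m ↦ by
    simpa [div_eq_mul_inv] using
      sum_eq_card_mul_iff_of_le univ (f := (w · m)) fun i _ ↦ (abs_le.mp (hentry i m)).2
  have hneg : ∀ m, ∑ i, w i m = -(n / 2) ↔ ∀ i, w i m = -(1 / 2) := fun m ↦ by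
    simpa [div_eq_mul_inv] using
      sum_eq_card_mul_iff_of_ge univ (f := (w · m)) fun i _ ↦ (abs_le.mp (hentry i m)).1
  have hρ : ∀ m ∈ (univ : Finset (Fin k)), 0 ≤ (k : ℝ) - 1 - (m : ℕ) :=
    fun m _ ↦ weylCoord_nonneg m
  have hmax : ∑ m : Fin k, ((n / 2 : ℝ) ^ 2 + 2 * (n / 2 * ((k : ℝ) - 1 - (m : ℕ)))) =
      (n : ℝ) ^ 2 * k / 4 + (n : ℝ) * k * ((k : ℝ) - 1) / 2 := by
    rw [sum_add_distrib, ← mul_sum, ← mul_sum, sum_weylCoord]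
    simp only [sum_const, card_univ, Fintype.card_fin, nsmul_eq_mul]
    ring
  refine ⟨hmax ▸ sum_sq_add_two_mul_sum_le univ (fun m _ ↦ hcol m) hρ, ?_⟩
  rw [← hmax, sum_sq_add_two_mul_sum_eq_iff univ (fun m _ ↦ hcol m) hρ, ← forall_columns_iff hk]
  simp only [mem_univ, true_implies, hpos, hneg, weylCoord_eq_zero_iff]
end
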